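/- arXiv:2002.01446 — 7 statements merged into one kernel-verified Lean document; each statement's English description precedes it below -/
import Mathlib

section
/- Let G be a group and N a characteristic subgroup of G (in particular N is normal). If the quotient group G/N has the R∞-property, then G has the R∞-property. -/
/-- The setoid of `φ`-twisted conjugacy on a group `G`:
`x ~ y` iff `y = g * x * (φ g)⁻¹` for some `g`. -/
def twistedConjSetoid (G : Type*) [Group G] (φ : G ≃* G) : Setoid G where
  r x y := ∃ g : G, y = g * x * (φ g)⁻¹
  iseqv := by
    refine ⟨fun x => ⟨1, by simp⟩, ?_, ?_⟩
    · rintro x y ⟨g, rfl⟩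
      exact ⟨g⁻¹, by simp [mul_assoc]⟩
    · rintro x y z ⟨g, rfl⟩ ⟨h, rfl⟩
      exact ⟨h * g, by simp [mul_assoc, mul_inv_rev]⟩


/-- A group `G` has the `R∞`-property if every automorphism has infinitely many twisted
conjugacy classes. -/
def RInfinity (G : Type*) [Group G] : Prop :=
  ∀ φ : G ≃* G, Infinite (Quotient (twistedConjSetoid G φ))

/-! An automorphism `φ` of `G` preserving the characteristic subgroup `N` induces an
automorphism `ψ` of `G ⧸ N`, and the projection `G → G ⧸ N` sends `φ`-twisted conjugate elements
to `ψ`-twisted conjugate ones. Being surjective, it induces a surjection from the `φ`-twisted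
conjugacy classes onto the `ψ`-twisted ones, of which there are infinitely many. -/

section TwistedConj

variable {G H : Type*} [Group G] [Group H] {φ : G ≃* G} {ψ : H ≃* H}

theorem twistedConjSetoid_map_rel (f : G →* H) (hf : ∀ g, f (φ g) = ψ (f g)) {x y : G}
    (hxy : twistedConjSetoid G φ x y) : twistedConjSetoid H ψ (f x) (f y) := by
  obtain ⟨g, rfl⟩ := hxy
  exact ⟨f g, by simp [hf]⟩

def twistedConjMap (f : G →* H) (hf : ∀ g, f (φ g) = ψ (f g)) :
    Quotient (twistedConjSetoid G φ) → Quotient (twistedConjSetoid H ψ) :=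
  Quotient.map f fun _ _ => twistedConjSetoid_map_rel f hf

theorem twistedConjMap_surjective (f : G →* H) (hf : ∀ g, f (φ g) = ψ (f g))
    (hsurj : Function.Surjective f) : Function.Surjective (twistedConjMap f hf) := by
  rintro ⟨y⟩
  obtain ⟨x, rfl⟩ := hsurj y
  exact ⟨Quotient.mk _ x, rfl⟩

theorem infinite_twistedConj_of_surjective (f : G →* H) (hf : ∀ g, f (φ g) = ψ (f g))
    (hsurj : Function.Surjective f) [Infinite (Quotient (twistedConjSetoid H ψ))] :
    Infinite (Quotient (twistedConjSetoid G φ)) :=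
  Infinite.of_surjective _ (twistedConjMap_surjective f hf hsurj)

end TwistedConj

theorem rInfinity_of_quotient_characteristic_general {G : Type*} [Group G]
    (N : Subgroup G) [N.Characteristic]
    (h : RInfinity (G ⧸ N)) : RInfinity G := by
  intro φ
  have hN : N.map φ.toMonoidHom = N := Subgroup.characteristic_iff_map_eq.mp ‹_› φ
  have := h (QuotientGroup.congr N N φ hN)
  exact infinite_twistedConj_of_surjective (QuotientGroup.mk' N)
    (fun g => (QuotientGroup.congr_mk N N φ hN g).symm) (QuotientGroup.mk'_surjective N)

/-- If `N` is a characteristic (hence normal) subgroup of `G` and `G ⧸ N` has the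
`R∞`-property, then so does `G`. -/
theorem rInfinity_of_quotient_characteristic {G : Type*} [Group G]
    (N : Subgroup G) [N.Normal] [N.Characteristic]
    (h : RInfinity (G ⧸ N)) : RInfinity G :=
  rInfinity_of_quotient_characteristic_general N h
end

section
/- Let G be a group and φ an automorphism of G. If the φ-twisted conjugacy class [e]_φ = { g·φ(g)⁻¹ : g ∈ G } of the identity element e is a subgroup of G, then it is a normal subgroup of G. -/
theorem conj_mul_twisted_eq {G F : Type*} [Group G] [FunLike F G G] [MonoidHomClass F G G]
    (φ : F) (g a : G) :
    g * (a * (φ a)⁻¹) * g⁻¹ = g * a * (φ (g * a))⁻¹ * (g * (φ g)⁻¹)⁻¹ := by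
  simp [mul_assoc]

/-- If the `φ`-twisted conjugacy class `[e]_φ = { g·φ(g)⁻¹ : g ∈ G }` of the identity is a
subgroup of `G`, then it is a normal subgroup. -/
theorem normal_of_twisted_class_of_one_subgroup {G : Type*} [Group G] (φ : G ≃* G)
    (H : Subgroup G) (hH : (H : Set G) = {x : G | ∃ g : G, x = g * (φ g)⁻¹}) :
    H.Normal := by
  have mem_iff (x : G) : x ∈ H ↔ ∃ g : G, x = g * (φ g)⁻¹ := Set.ext_iff.mp hH x
  refine ⟨fun x hx g => ?_⟩
  obtain ⟨a, rfl⟩ := (mem_iff x).mp hx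
  rw [conj_mul_twisted_eq φ g a]
  exact H.mul_mem ((mem_iff _).mpr ⟨g * a, rfl⟩) (H.inv_mem ((mem_iff _).mpr ⟨g, rfl⟩))
end

section
/- Let G be a group and φ a central automorphism of G. Then the φ-twisted conjugacy class [e]_φ = { g·φ(g)⁻¹ : g ∈ G } of the identity element is a subgroup of G. -/
/-! For a central endomorphism `f`, the map `g ↦ g * (f g)⁻¹` takes values in the centre, and this
makes it a homomorphism: `[e]_f` is its range. -/

open Subgroup

section

variable {G : Type*} [Group G]

theorem mul_inv_mem_center_of_inv_mul_mem_center {a b : G} (h : a⁻¹ * b ∈ center G) :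
    a * b⁻¹ ∈ center G := by
  have hconj := (center G).normal_of_characteristic.conj_mem _ (inv_mem h) a
  rwa [mul_inv_rev, inv_inv, mul_assoc, mul_inv_cancel_right] at hconj

def MonoidHom.mulInvOfCentral (f : G →* G) (hf : ∀ g, g⁻¹ * f g ∈ center G) : G →* G where
  toFun g := g * (f g)⁻¹
  map_one' := by simp
  map_mul' g h := by
    have hcomm := mem_center_iff.mp (mul_inv_mem_center_of_inv_mul_mem_center (hf h)) (f g)⁻¹
    calc g * h * (f (g * h))⁻¹ = g * (h * (f h)⁻¹ * (f g)⁻¹) := by rw [map_mul]; group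
      _ = g * (f g)⁻¹ * (h * (f h)⁻¹) := by rw [← hcomm]; group

end

/-- If `φ` is a central automorphism of `G`, then the `φ`-twisted conjugacy class
`[e]_φ = { g·φ(g)⁻¹ : g ∈ G }` of the identity is a subgroup of `G`. -/
theorem twisted_class_of_one_subgroup_of_central {G : Type*} [Group G] (φ : G ≃* G)
    (hφ : ∀ g : G, g⁻¹ * φ g ∈ Subgroup.center G) :
    ∃ H : Subgroup G, (H : Set G) = {x : G | ∃ g : G, x = g * (φ g)⁻¹} := by
  refine ⟨(MonoidHom.mulInvOfCentral φ.toMonoidHom hφ).range, ?_⟩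
  ext x
  simp [MonoidHom.mulInvOfCentral, eq_comm]
end

section
/- Let G be a group with trivial center, Z(G) = {e}. Then G has the R∞-property if and only if G has the S∞-property. -/
/-- The isogredience setoid on the coset `Inn(G)·γ` of `Inn(G)` in `Aut(G)`:
`α ≈ β` iff `β = i_h ∘ α ∘ i_{h⁻¹}` for some `h : G`. -/
def cosetIsogSetoid (G : Type*) [Group G] (γ : MulAut G) :
    Setoid {α : MulAut G // ∃ g : G, α = MulAut.conj g * γ} where
  r α β := ∃ h : G, (β : MulAut G) =
    MulAut.conj h * (α : MulAut G) * (MulAut.conj h)⁻¹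
  iseqv := by
    refine ⟨fun α => ⟨1, by simp⟩, ?_, ?_⟩
    · rintro α β ⟨h, hh⟩
      exact ⟨h⁻¹, by rw [hh]; simp [mul_assoc]⟩
    · rintro α β δ ⟨h₁, hh₁⟩ ⟨h₂, hh₂⟩
      exact ⟨h₂ * h₁, by rw [hh₂, hh₁]; simp [mul_assoc, map_mul, mul_inv_rev]⟩

/-- A group `G` has the `S∞`-property if every coset `Inn(G)·γ` of `Inn(G)` in `Aut(G)`
contains infinitely many isogredience classes. -/
def SInfinity (G : Type*) [Group G] : Prop :=
  ∀ γ : MulAut G, Infinite (Quotient (cosetIsogSetoid G γ))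

/-! Sending `x` to the automorphism `i_x ∘ γ` maps `G` onto the coset `Inn(G)·γ`, and the
identity `i_h ∘ (i_x ∘ γ) ∘ i_h⁻¹ = i_{h x γ(h)⁻¹} ∘ γ` shows that it carries `γ`-twisted
conjugacy onto isogredience. When `Z(G)` is trivial, `x ↦ i_x` is injective, so this map is a
bijection and induces a bijection between twisted conjugacy classes and isogredience classes. -/

namespace MulAut

variable {G : Type*} [Group G]

theorem mul_conj (γ : MulAut G) (h : G) : γ * conj h = conj (γ h) * γ := by
  ext g
  simp

theorem conj_mul_conj_mul_conj_inv (γ : MulAut G) (h x : G) :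
    conj h * (conj x * γ) * (conj h)⁻¹ = conj (h * x * (γ h)⁻¹) * γ := by
  rw [← map_inv, mul_assoc, mul_assoc, mul_conj, map_mul, map_mul, map_inv, mul_assoc,
    mul_assoc]

theorem ker_conj_le_center : (conj : G →* MulAut G).ker ≤ Subgroup.center G := by
  intro g hg
  rw [Subgroup.mem_center_iff]
  intro h
  have hconj : g * h * g⁻¹ = h := by
    simpa using DFunLike.congr_fun (MonoidHom.mem_ker.mp hg) h
  exact (mul_inv_eq_iff_eq_mul.mp hconj).symm

theorem conj_injective_of_center_eq_bot (hZ : Subgroup.center G = ⊥) :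
    Function.Injective (conj : G →* MulAut G) :=
  (MonoidHom.ker_eq_bot_iff _).mp (eq_bot_iff.mpr (hZ ▸ ker_conj_le_center))

end MulAut

section CenterTrivial

open MulAut

variable {G : Type*} [Group G] (hZ : Subgroup.center G = ⊥) (γ : MulAut G)

noncomputable def equivInnCoset : G ≃ {α : MulAut G // ∃ g : G, α = conj g * γ} :=
  Equiv.ofBijective (fun x => ⟨conj x * γ, x, rfl⟩)
    ⟨fun _ _ hxy =>
        conj_injective_of_center_eq_bot hZ (mul_right_cancel (congrArg Subtype.val hxy)),
      fun ⟨_, x, hx⟩ => ⟨x, Subtype.ext hx.symm⟩⟩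

theorem twistedConj_iff_isogredient (x y : G) :
    twistedConjSetoid G γ x y ↔
      cosetIsogSetoid G γ (equivInnCoset hZ γ x) (equivInnCoset hZ γ y) := by
  change (∃ h, y = h * x * (γ h)⁻¹) ↔ ∃ h, conj y * γ = conj h * (conj x * γ) * (conj h)⁻¹
  simp only [conj_mul_conj_mul_conj_inv, mul_left_inj,
    (conj_injective_of_center_eq_bot hZ).eq_iff]

noncomputable def twistedConjClassesEquivIsogredienceClasses :
    Quotient (twistedConjSetoid G γ) ≃ Quotient (cosetIsogSetoid G γ) :=
  Quotient.congr (equivInnCoset hZ γ) (twistedConj_iff_isogredient hZ γ)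

end CenterTrivial

/-- If `G` has trivial center, then `G` has the `R∞`-property if and only if it has the
`S∞`-property. -/
theorem rInfinity_iff_sInfinity_of_center_trivial {G : Type*} [Group G]
    (hZ : Subgroup.center G = ⊥) : RInfinity G ↔ SInfinity G :=
  forall_congr' fun γ => (twistedConjClassesEquivIsogredienceClasses hZ γ).infinite_iff
end

section
/- Let G be a group and N a characteristic subgroup of G. If the quotient group G/N has the S∞-property, then G has the S∞-property. -/
/-! Every automorphism of `G` descends to `G ⧸ N`, inner ones to inner ones, so reducing modulo
`N` maps the coset `Inn(G)·γ` onto the coset `Inn(G ⧸ N)·γ̄`, compatibly with isogredience.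
Hence `S(Inn(G)·γ) ≥ S(Inn(G ⧸ N)·γ̄)`, which is infinite. -/

namespace MulAut

variable {G : Type*} [Group G]

def quotient (N : Subgroup G) [N.Normal] [N.Characteristic] : MulAut G →* MulAut (G ⧸ N) where
  toFun φ := QuotientGroup.congr N N φ (Subgroup.characteristic_iff_map_eq.mp ‹_› φ)
  map_one' := by
    ext q
    induction q using QuotientGroup.induction_on
    rfl
  map_mul' _ _ := by
    ext q
    induction q using QuotientGroup.induction_on
    rfl

theorem quotient_conj (N : Subgroup G) [N.Normal] [N.Characteristic] (g : G) :
    quotient N (conj g) = conj (g : G ⧸ N) := by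
  ext q
  induction q using QuotientGroup.induction_on
  rfl

end MulAut

section CosetIsog

variable {G H : Type*} [Group G] [Group H] {f : MulAut G →* MulAut H} {π : G →* H}

theorem map_mem_conj_coset (hf : ∀ g, f (MulAut.conj g) = MulAut.conj (π g)) {γ α : MulAut G}
    (hα : ∃ g : G, α = MulAut.conj g * γ) : ∃ h : H, f α = MulAut.conj h * f γ := by
  obtain ⟨g, rfl⟩ := hα
  exact ⟨π g, by rw [map_mul, hf]⟩

def cosetIsogMap (hf : ∀ g, f (MulAut.conj g) = MulAut.conj (π g)) (γ : MulAut G) :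
    Quotient (cosetIsogSetoid G γ) → Quotient (cosetIsogSetoid H (f γ)) :=
  Quotient.map (fun α => ⟨f α, map_mem_conj_coset hf α.2⟩) <| by
    rintro α β ⟨k, hk⟩
    refine ⟨π k, ?_⟩
    change f β = _
    rw [hk, map_mul, map_mul, map_inv, hf]

theorem cosetIsogMap_surjective (hf : ∀ g, f (MulAut.conj g) = MulAut.conj (π g))
    (hπ : Function.Surjective π) (γ : MulAut G) : Function.Surjective (cosetIsogMap hf γ) := by
  rintro ⟨β, h, rfl⟩
  obtain ⟨g, rfl⟩ := hπ h
  refine ⟨Quotient.mk _ ⟨MulAut.conj g * γ, g, rfl⟩, congrArg (Quotient.mk _) (Subtype.ext ?_)⟩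
  change f (MulAut.conj g * γ) = _
  rw [map_mul, hf]

end CosetIsog

/-- If `N` is a characteristic subgroup of `G` and `G ⧸ N` has the `S∞`-property, then so
does `G`. -/
theorem sInfinity_of_quotient_characteristic {G : Type*} [Group G]
    (N : Subgroup G) [N.Normal] [N.Characteristic]
    (h : SInfinity (G ⧸ N)) : SInfinity G := fun γ =>
  haveI := h (MulAut.quotient N γ)
  Infinite.of_surjective _
    (cosetIsogMap_surjective (MulAut.quotient_conj N) (QuotientGroup.mk'_surjective N) γ)
end

section
/- Let G be a simple group with the R∞-property, and let φ be an automorphism of G. If the φ-twisted conjugacy class [e]_φ = { g·φ(g)⁻¹ : g ∈ G } is a subgroup of G, then φ is the identity automorphism. -/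
/-! A subgroup `[e]_φ` is closed under conjugation, so in a simple group it is trivial, which
forces `φ = id`, or all of `G`, which makes `[e]_φ` the only twisted class and contradicts `R∞`. -/

theorem Subgroup.normal_of_coe_eq_twistedClass_one {G F : Type*} [Group G] [FunLike F G G]
    [MonoidHomClass F G G] {φ : F} {H : Subgroup G}
    (hH : (H : Set G) = {x : G | ∃ g : G, x = g * (φ g)⁻¹}) : H.Normal := by
  have mem_iff (x : G) : x ∈ H ↔ ∃ g : G, x = g * (φ g)⁻¹ := by rw [← SetLike.mem_coe, hH]; rfl
  have mem (g : G) : g * (φ g)⁻¹ ∈ H := (mem_iff _).2 ⟨g, rfl⟩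
  refine ⟨fun h hh a => ?_⟩
  obtain ⟨g, rfl⟩ := (mem_iff h).1 hh
  -- a (g φ(g)⁻¹) a⁻¹ = ((a g) φ(a g)⁻¹) (a φ(a)⁻¹)⁻¹
  have := H.mul_mem (mem (a * g)) (H.inv_mem (mem a))
  simpa [mul_assoc] using this

theorem subsingleton_quotient_twistedConjSetoid_of_forall {G : Type*} [Group G] {φ : G ≃* G}
    (h : ∀ x : G, ∃ g : G, x = g * (φ g)⁻¹) :
    Subsingleton (Quotient (twistedConjSetoid G φ)) := by
  have eq_one (x : G) : (⟦x⟧ : Quotient (twistedConjSetoid G φ)) = ⟦1⟧ := by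
    obtain ⟨g, hg⟩ := h x
    exact Quotient.sound <| (twistedConjSetoid G φ).symm ⟨g, by rw [hg, mul_one]⟩
  exact ⟨Quotient.ind₂ fun x y => (eq_one x).trans (eq_one y).symm⟩

/-- If `G` is a simple group with the `R∞`-property and the twisted conjugacy class
`[e]_φ = { g·φ(g)⁻¹ : g ∈ G }` is a subgroup of `G`, then `φ` is the identity. -/
theorem eq_id_of_twisted_class_of_one_subgroup {G : Type*} [Group G] [IsSimpleGroup G]
    (hR : RInfinity G) (φ : G ≃* G) (H : Subgroup G)
    (hH : (H : Set G) = {x : G | ∃ g : G, x = g * (φ g)⁻¹}) :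
    ∀ x : G, φ x = x := by
  have mem (x : G) : x * (φ x)⁻¹ ∈ H := by rw [← SetLike.mem_coe, hH]; exact ⟨x, rfl⟩
  rcases (Subgroup.normal_of_coe_eq_twistedClass_one hH).eq_bot_or_eq_top with hbot | htop
  · intro x
    have := mem x
    rw [hbot, Subgroup.mem_bot, mul_inv_eq_one] at this
    exact this.symm
  · have hall (x : G) : ∃ g : G, x = g * (φ g)⁻¹ := by
      have : x ∈ (H : Set G) := by simp [htop]
      rwa [hH] at this
    have := subsingleton_quotient_twistedConjSetoid_of_forall hall
    exact (not_infinite_iff_finite.2 inferInstance (hR φ)).elim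
end

section
/- Let G be a group such that G/Z(G) is a simple group having the R∞-property, and let φ be an automorphism of G. Then the φ-twisted conjugacy class [e]_φ = { g·φ(g)⁻¹ : g ∈ G } is a subgroup of G if and only if φ is a central automorphism of G. -/
/-! If `[e]_φ` is a subgroup then it is normal, since
`x (q φ(q)⁻¹) x⁻¹ = (xq) φ(xq)⁻¹ · (x φ(x)⁻¹)⁻¹`. Its image in the simple group `G ⧸ Z(G)` is
`[e]_ψ` for the induced automorphism `ψ`, a normal subgroup there. It cannot be everything,
since then `ψ` would have a single twisted class; so it is trivial, i.e. every `g φ(g)⁻¹` is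
central. Conversely, for a central `φ` the map `g ↦ g φ(g)⁻¹` is a homomorphism, whose range
is `[e]_φ`. -/

open Subgroup

section TwistedClass

variable {G : Type*} [Group G]

def twistedClassOne (φ : G → G) : Set G := {x | ∃ g : G, x = g * (φ g)⁻¹}

theorem mul_inv_map_mem_of_coe_eq_twistedClassOne {φ : G → G} {H : Subgroup G}
    (hH : (H : Set G) = twistedClassOne φ) (g : G) : g * (φ g)⁻¹ ∈ H := by
  rw [← SetLike.mem_coe, hH]
  exact ⟨g, rfl⟩

theorem Subgroup.normal_of_coe_eq_twistedClassOne {φ : G →* G} {H : Subgroup G}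
    (hH : (H : Set G) = twistedClassOne φ) : H.Normal where
  conj_mem n hn x := by
    rw [← SetLike.mem_coe, hH] at hn
    obtain ⟨q, rfl⟩ := hn
    have hconj : x * (q * (φ q)⁻¹) * x⁻¹ = (x * q) * (φ (x * q))⁻¹ * (x * (φ x)⁻¹)⁻¹ := by
      simp only [map_mul]; group
    rw [hconj]
    exact H.mul_mem (mul_inv_map_mem_of_coe_eq_twistedClassOne hH _)
      (H.inv_mem (mul_inv_map_mem_of_coe_eq_twistedClassOne hH x))

theorem image_twistedClassOne {Q : Type*} [Group Q] {π : G →* Q}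
    (hπ : Function.Surjective π) {φ : G →* G} {ψ : Q →* Q} (hψ : ∀ g, ψ (π g) = π (φ g)) :
    π '' twistedClassOne φ = twistedClassOne ψ := by
  ext y
  constructor
  · rintro ⟨_, ⟨g, rfl⟩, rfl⟩
    exact ⟨π g, by rw [hψ, map_mul, map_inv]⟩
  · rintro ⟨q, rfl⟩
    obtain ⟨g, rfl⟩ := hπ q
    exact ⟨g * (φ g)⁻¹, ⟨g, rfl⟩, by rw [hψ, map_mul, map_inv]⟩

theorem subsingleton_quotient_twistedConjSetoid {φ : G ≃* G}
    (h : twistedClassOne φ = Set.univ) : Subsingleton (Quotient (twistedConjSetoid G φ)) := by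
  have hone : ∀ x, (twistedConjSetoid G φ).r 1 x := fun x => by
    obtain ⟨g, hg⟩ := h.symm ▸ Set.mem_univ x
    exact ⟨g, by rw [hg, mul_one]⟩
  refine ⟨fun a b => Quotient.inductionOn₂ a b fun x y => Quotient.sound ?_⟩
  exact (twistedConjSetoid G φ).iseqv.trans ((twistedConjSetoid G φ).iseqv.symm (hone x)) (hone y)

theorem eq_bot_of_coe_eq_twistedClassOne [IsSimpleGroup G] {φ : G ≃* G}
    [Infinite (Quotient (twistedConjSetoid G φ))] {H : Subgroup G}
    (hH : (H : Set G) = twistedClassOne φ) : H = ⊥ := by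
  refine (normal_of_coe_eq_twistedClassOne (φ := φ.toMonoidHom) hH).eq_bot_or_eq_top.resolve_right
    fun htop => not_subsingleton _ (subsingleton_quotient_twistedConjSetoid (φ := φ) ?_)
  rw [← hH, htop, coe_top]

theorem mul_inv_map_mem_center_iff (φ : G → G) (g : G) :
    g * (φ g)⁻¹ ∈ center G ↔ g⁻¹ * φ g ∈ center G := by
  rw [(center G).normal_of_characteristic.mem_comm_iff, ← inv_mem_iff, mul_inv_rev, inv_inv]

theorem exists_subgroup_coe_eq_twistedClassOne {φ : G →* G}
    (h : ∀ g, g * (φ g)⁻¹ ∈ center G) : ∃ H : Subgroup G, (H : Set G) = twistedClassOne φ := by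
  let f : G →* G :=
    { toFun g := g * (φ g)⁻¹
      map_one' := by simp
      map_mul' x y := by
        rw [map_mul, mul_inv_rev, ← mul_assoc, mul_assoc x, mul_assoc x,
          ← mem_center_iff.mp (h y)]
        group }
  exact ⟨f.range, by ext; simp [f, twistedClassOne, eq_comm]⟩

end TwistedClass

/-- If `G ⧸ Z(G)` is a simple group with the `R∞`-property, then for an automorphism `φ` of
`G` the twisted conjugacy class `[e]_φ = { g·φ(g)⁻¹ : g ∈ G }` is a subgroup of `G` if and
only if `φ` is a central automorphism. -/
theorem twisted_class_of_one_subgroup_iff_central {G : Type*} [Group G]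
    [IsSimpleGroup (G ⧸ Subgroup.center G)]
    (hR : RInfinity (G ⧸ Subgroup.center G)) (φ : G ≃* G) :
    (∃ H : Subgroup G, (H : Set G) = {x : G | ∃ g : G, x = g * (φ g)⁻¹}) ↔
    (∀ g : G, g⁻¹ * φ g ∈ Subgroup.center G) := by
  constructor
  · rintro ⟨H, hH⟩ g
    let π := QuotientGroup.mk' (center G)
    let ψ := QuotientGroup.congr _ _ φ (characteristic_iff_map_eq.mp centerCharacteristic φ)
    have : Infinite (Quotient (twistedConjSetoid _ ψ)) := hR ψ
    have hK : (H.map π : Set (G ⧸ center G)) = twistedClassOne ψ := by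
      rw [coe_map, hH]
      exact image_twistedClassOne (φ := φ.toMonoidHom) (ψ := ψ.toMonoidHom)
        (QuotientGroup.mk'_surjective _) fun _ => rfl
    have hg : π (g * (φ g)⁻¹) ∈ H.map π :=
      mem_map_of_mem π (mul_inv_map_mem_of_coe_eq_twistedClassOne hH g)
    rw [eq_bot_of_coe_eq_twistedClassOne hK, mem_bot, QuotientGroup.mk'_apply,
      QuotientGroup.eq_one_iff] at hg
    exact (mul_inv_map_mem_center_iff φ g).mp hg
  · intro hφ
    exact exists_subgroup_coe_eq_twistedClassOne (φ := φ.toMonoidHom)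
      fun g => (mul_inv_map_mem_center_iff _ g).mpr (hφ g)
end
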